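/- Let λ > 0, y > 0 and t ∈ (0,1). Define q̃_u(x,z) := (1/(xz√(2πu))) · ( exp(−(x−z)²/(2u)) − exp(−(x+z)²/(2u)) ) for x, z, u > 0, q̃_u(0,z) := (2/√(2πu³)) · exp(−z²/(2u)), and f_{Ẑ^λ}(s) := (λ/√(2π(1−s)s³)) · exp(−λ²(1−s)/(2s)) for s ∈ (0,1). Then ∫_t^1 ( q̃_{s−t}(y,λ) / q̃_s(0,λ) ) · f_{Ẑ^λ}(s) ds = Φ^{1,λ}(t,y), where Φ^{1,λ}(t,y) := (1/(2√2 · y)) · exp(λ²/2) · ∫_{(y−λ)²/(2(1−t))}^{(y+λ)²/(2(1−t))} e^{−u} u^{−1/2} du. -/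

import Mathlib

/-!
After cancelling the Gaussian factors, the integrand is a constant times
`(exp (-α / (s - t)) - exp (-β / (s - t))) / √((s - t) (1 - s))`
with `α, β = (y ∓ λ)² / 2`.
The substitution `s = t + (1 - t) / (1 + w²)` turns the arcsine weight into `2 dw / (1 + w²)`
and the exponents into `-(α / (1 - t)) (1 + w²)`. Writing
`(exp (-p c) - exp (-q c)) / c = ∫_p^q exp (-r c) dr` with `c = 1 + w²` and exchanging the
integrals, the inner `w`-integral is Gaussian and equals `√π / 2 · exp (-r) / √r`.
-/

open Set

open MeasureTheory Real

/-- `q̃_u(x,z)` for `x, z, u > 0` (Bessel(3) transition kernel factor). -/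
noncomputable def qtilde (u x z : ℝ) : ℝ :=
  1 / (x * z * Real.sqrt (2 * π * u)) *
    (Real.exp (-(x - z) ^ 2 / (2 * u)) - Real.exp (-(x + z) ^ 2 / (2 * u)))

/-- `q̃_u(0,z)`. -/
noncomputable def qtildeZero (u z : ℝ) : ℝ :=
  2 / Real.sqrt (2 * π * u ^ 3) * Real.exp (-z ^ 2 / (2 * u))

/-- The density `f_{Ẑ^λ}` of the last exit time from `λ > 0`. -/
noncomputable def fZhat (lam s : ℝ) : ℝ :=
  lam / Real.sqrt (2 * π * (1 - s) * s ^ 3) * Real.exp (-lam ^ 2 * (1 - s) / (2 * s))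

/-- `Φ^{1,λ}(t,y)`. -/
noncomputable def Phi1 (lam t y : ℝ) : ℝ :=
  1 / (2 * Real.sqrt 2 * y) * Real.exp (lam ^ 2 / 2) *
    ∫ u in (y - lam) ^ 2 / (2 * (1 - t))..(y + lam) ^ 2 / (2 * (1 - t)),
      Real.exp (-u) / Real.sqrt u

lemma integral_exp_neg_mul (p q : ℝ) {c : ℝ} (hc : c ≠ 0) :
    ∫ r in p..q, exp (-(r * c)) = (exp (-(p * c)) - exp (-(q * c))) / c := by
  rw [intervalIntegral.integral_comp_mul_right (fun x => exp (-x)) hc]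
  simp [intervalIntegral.integral_comp_neg, div_eq_inv_mul]

lemma integral_Ioi_exp_neg_mul_one_add_sq {r : ℝ} (hr : 0 < r) :
    ∫ w in Ioi (0 : ℝ), exp (-(r * (1 + w ^ 2))) = sqrt π / 2 * (exp (-r) / sqrt r) := by
  have hsplit : ∀ w : ℝ, exp (-(r * (1 + w ^ 2))) = exp (-r) * exp (-r * w ^ 2) := fun w => by
    rw [← exp_add]; ring_nf
  simp_rw [hsplit]
  rw [integral_const_mul, integral_gaussian_Ioi, sqrt_div pi_pos.le]
  field_simp

lemma integrable_exp_neg_mul_one_add_sq_prod {p q : ℝ} (hp : 0 ≤ p) (hpq : p ≤ q) :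
    Integrable (fun z : ℝ × ℝ => exp (-(z.2 * (1 + z.1 ^ 2))))
      ((volume.restrict (Ioi 0)).prod (volume.restrict (Ioc p q))) := by
  have hpos : ∀ w : ℝ, 0 < 1 + w ^ 2 := fun w => by positivity
  refine (integrable_prod_iff (by fun_prop)).2
    ⟨ae_of_all _ fun w => (by fun_prop : Continuous _).integrableOn_Ioc, ?_⟩
  simp only [norm_eq_abs, abs_of_pos (exp_pos _), ← intervalIntegral.integral_of_le hpq,
    integral_exp_neg_mul p q (hpos _).ne']
  refine integrable_inv_one_add_sq.integrableOn.mono'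
    ((by fun_prop : Continuous _).div (by fun_prop) fun w => (hpos w).ne').aestronglyMeasurable
    (ae_of_all _ fun w => ?_)
  have hexp : exp (-(q * (1 + w ^ 2))) ≤ exp (-(p * (1 + w ^ 2))) :=
    exp_le_exp.2 (by nlinarith [hpos w])
  have hone : exp (-(p * (1 + w ^ 2))) ≤ 1 := exp_le_one_iff.2 (by nlinarith [hpos w])
  rw [norm_of_nonneg (div_nonneg (sub_nonneg.2 hexp) (hpos w).le), div_eq_mul_inv]
  exact mul_le_of_le_one_left (inv_pos.2 (hpos w)).le
    (by linarith [exp_pos (-(q * (1 + w ^ 2)))])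

lemma integral_Ioi_exp_sub_exp_div_one_add_sq {p q : ℝ} (hp : 0 ≤ p) (hpq : p ≤ q) :
    ∫ w in Ioi (0 : ℝ), (exp (-(p * (1 + w ^ 2))) - exp (-(q * (1 + w ^ 2)))) / (1 + w ^ 2) =
      sqrt π / 2 * ∫ u in p..q, exp (-u) / sqrt u := by
  have hpos : ∀ w : ℝ, 0 < 1 + w ^ 2 := fun w => by positivity
  calc _ = ∫ w in Ioi (0 : ℝ), ∫ r in Ioc p q, exp (-(r * (1 + w ^ 2))) := by
        refine setIntegral_congr_fun measurableSet_Ioi fun w _ => ?_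
        rw [← intervalIntegral.integral_of_le hpq, integral_exp_neg_mul p q (hpos w).ne']
    _ = ∫ r in Ioc p q, ∫ w in Ioi (0 : ℝ), exp (-(r * (1 + w ^ 2))) :=
        integral_integral_swap (integrable_exp_neg_mul_one_add_sq_prod hp hpq)
    _ = ∫ r in Ioc p q, sqrt π / 2 * (exp (-r) / sqrt r) :=
        setIntegral_congr_fun measurableSet_Ioc fun r hr =>
          integral_Ioi_exp_neg_mul_one_add_sq (hp.trans_lt hr.1)
    _ = _ := by rw [integral_const_mul, intervalIntegral.integral_of_le hpq]

lemma integral_Ioo_eq_integral_Ioi_comp_div_one_add_sq {a b : ℝ} (hab : a < b) (g : ℝ → ℝ) :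
    ∫ s in Ioo a b, g s =
      ∫ w in Ioi (0 : ℝ), 2 * (b - a) * w / (1 + w ^ 2) ^ 2 * g (a + (b - a) / (1 + w ^ 2)) := by
  have hT : 0 < b - a := sub_pos.2 hab
  have hpos : ∀ w : ℝ, 0 < 1 + w ^ 2 := fun w => by positivity
  set φ : ℝ → ℝ := fun w => a + (b - a) / (1 + w ^ 2) with hφ
  have hderiv : ∀ w ∈ Ioi (0 : ℝ),
      HasDerivWithinAt φ (-(2 * (b - a) * w / (1 + w ^ 2) ^ 2)) (Ioi 0) w := by
    intro w _
    have hden : HasDerivAt (fun w => 1 + w ^ 2) (2 * w) w := by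
      simpa using (hasDerivAt_pow 2 w).const_add 1
    refine (((hasDerivAt_const w (b - a)).div hden (hpos w).ne').const_add a
      ).hasDerivWithinAt.congr_deriv ?_
    ring
  have hinj : InjOn φ (Ioi 0) := by
    intro u (hu : 0 < u) v (hv : 0 < v) huv
    have h : (b - a) / (1 + u ^ 2) = (b - a) / (1 + v ^ 2) := add_left_cancel huv
    rw [div_eq_div_iff (hpos u).ne' (hpos v).ne', mul_right_inj' hT.ne'] at h
    exact (sq_eq_sq₀ hu.le hv.le).1 (by linarith)
  have himage : φ '' Ioi 0 = Ioo a b := by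
    ext s
    constructor
    · rintro ⟨w, hw : 0 < w, rfl⟩
      refine ⟨lt_add_of_pos_right a (div_pos hT (hpos w)), ?_⟩
      rw [← lt_sub_iff_add_lt', div_lt_iff₀ (hpos w)]
      nlinarith [mul_pos hw hw]
    · rintro ⟨has, hsb⟩
      have hsa : 0 < s - a := sub_pos.2 has
      have hbs : 0 < (b - s) / (s - a) := div_pos (sub_pos.2 hsb) hsa
      refine ⟨sqrt ((b - s) / (s - a)), sqrt_pos.2 hbs, ?_⟩
      simp only [hφ, sq_sqrt hbs.le]
      field_simp
      ring
  rw [← himage, integral_image_eq_integral_abs_deriv_smul measurableSet_Ioi hderiv hinj]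
  refine setIntegral_congr_fun measurableSet_Ioi fun w (hw : 0 < w) => ?_
  rw [abs_neg, abs_of_nonneg (by have := hpos w; positivity), smul_eq_mul]

lemma integral_Ioo_exp_sub_exp_div_sqrt {a b c₁ c₂ : ℝ} (hab : a < b) (hc₁ : 0 ≤ c₁)
    (hc : c₁ ≤ c₂) :
    ∫ s in Ioo a b, (exp (-c₁ / (s - a)) - exp (-c₂ / (s - a))) / sqrt ((s - a) * (b - s)) =
      sqrt π * ∫ u in c₁ / (b - a)..c₂ / (b - a), exp (-u) / sqrt u := by
  have hT : 0 < b - a := sub_pos.2 hab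
  rw [integral_Ioo_eq_integral_Ioi_comp_div_one_add_sq hab]
  calc _ = ∫ w in Ioi (0 : ℝ), 2 * ((exp (-(c₁ / (b - a) * (1 + w ^ 2))) -
        exp (-(c₂ / (b - a) * (1 + w ^ 2)))) / (1 + w ^ 2)) := by
        refine setIntegral_congr_fun measurableSet_Ioi fun w (hw : 0 < w) => ?_
        have hpos : 0 < 1 + w ^ 2 := by positivity
        have hsqrt : sqrt ((b - a) / (1 + w ^ 2) * (b - (a + (b - a) / (1 + w ^ 2)))) =
            (b - a) * w / (1 + w ^ 2) := by
          rw [← sqrt_sq (by positivity : 0 ≤ (b - a) * w / (1 + w ^ 2))]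
          congr 1
          field_simp
          ring
        have hexp : ∀ c, -c / ((b - a) / (1 + w ^ 2)) = -(c / (b - a) * (1 + w ^ 2)) :=
          fun c => by field_simp
        rw [add_sub_cancel_left, hsqrt, hexp, hexp]
        field_simp
    _ = _ := by
        rw [integral_const_mul, integral_Ioi_exp_sub_exp_div_one_add_sq (by positivity)
          (by gcongr)]
        ring

lemma qtilde_div_qtildeZero_mul_fZhat {lam y t s : ℝ} (hlam : lam ≠ 0) (hy : y ≠ 0)
    (ht : 0 ≤ t) (hts : t < s) (hs : s < 1) :
    qtilde (s - t) y lam / qtildeZero s lam * fZhat lam s =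
      exp (lam ^ 2 / 2) / (2 * y * sqrt (2 * π)) *
        ((exp (-((y - lam) ^ 2 / 2) / (s - t)) - exp (-((y + lam) ^ 2 / 2) / (s - t))) /
          sqrt ((s - t) * (1 - s))) := by
  have hst : 0 < s - t := sub_pos.2 hts
  have h1s : 0 < 1 - s := sub_pos.2 hs
  have hs0 : 0 < s := ht.trans_lt hts
  have hexp : exp (-lam ^ 2 * (1 - s) / (2 * s)) =
      exp (lam ^ 2 / 2) * exp (-lam ^ 2 / (2 * s)) := by
    rw [← exp_add]; congr 1; field_simp; ring
  have hhalf : ∀ x : ℝ, -(x / 2) / (s - t) = -x / (2 * (s - t)) := fun x => by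
    rw [neg_div, neg_div, div_div]
  unfold qtilde qtildeZero fZhat
  rw [show 2 * π * (1 - s) * s ^ 3 = 2 * π * ((1 - s) * s ^ 3) by ring, hhalf, hhalf,
    sqrt_mul (by positivity) (s - t), sqrt_mul (by positivity) (s ^ 3),
    sqrt_mul (by positivity) ((1 - s) * s ^ 3), sqrt_mul h1s.le (s ^ 3), sqrt_mul hst.le (1 - s),
    hexp]
  have : sqrt (s ^ 3) ≠ 0 := by positivity
  have : sqrt (s - t) ≠ 0 := by positivity
  have : sqrt (1 - s) ≠ 0 := by positivity
  field_simp

theorem density_first_component (lam : ℝ) (hlam : 0 < lam) (y : ℝ) (hy : 0 < y)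
    (t : ℝ) (ht : t ∈ Set.Ioo (0 : ℝ) 1) :
    ∫ s in Set.Ioo t 1, qtilde (s - t) y lam / qtildeZero s lam * fZhat lam s =
      Phi1 lam t y := by
  obtain ⟨ht0, ht1⟩ := ht
  rw [setIntegral_congr_fun measurableSet_Ioo fun s hs =>
      qtilde_div_qtildeZero_mul_fZhat hlam.ne' hy.ne' ht0.le hs.1 hs.2,
    integral_const_mul, integral_Ioo_exp_sub_exp_div_sqrt ht1 (by positivity)
      (by nlinarith [mul_pos hy hlam]),
    Phi1, div_div, div_div, sqrt_mul zero_le_two π]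
  field_simp
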